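/- Let G, Ĝ ∈ 𝕆^{n×k} with tr(GᵀD) > 0. If ĜᵀD = DᵀĜ and ĜᵀD is positive semidefinite, and the strict inequality tr(Ĝᵀ E(G) Ĝ) < tr(Gᵀ E(G) G) holds, then η(Ĝ) > η(G). -/

import Mathlib

open Matrix

/-- The objective `η(G) = tr(GᵀD)² / tr(GᵀAG)`. -/
noncomputable def eta {n k : ℕ} (A : Matrix (Fin n) (Fin n) ℝ)
    (D G : Matrix (Fin n) (Fin k) ℝ) : ℝ :=
  (Matrix.trace (Gᵀ * D)) ^ 2 / Matrix.trace (Gᵀ * A * G)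

/-- `ξ(G) = tr(GᵀAG) / tr(GᵀD)`. -/
noncomputable def xi {n k : ℕ} (A : Matrix (Fin n) (Fin n) ℝ)
    (D G : Matrix (Fin n) (Fin k) ℝ) : ℝ :=
  Matrix.trace (Gᵀ * A * G) / Matrix.trace (Gᵀ * D)

/-- `sym(B) = (B + Bᵀ)/2`. -/
noncomputable def symPart {k : ℕ} (B : Matrix (Fin k) (Fin k) ℝ) : Matrix (Fin k) (Fin k) ℝ :=
  (1 / 2 : ℝ) • (B + Bᵀ)

/-- `M(G) = sym(GᵀAG − ξ(G)·GᵀD)`. -/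
noncomputable def Mmat {n k : ℕ} (A : Matrix (Fin n) (Fin n) ℝ)
    (D G : Matrix (Fin n) (Fin k) ℝ) : Matrix (Fin k) (Fin k) ℝ :=
  symPart (Gᵀ * A * G - xi A D G • (Gᵀ * D))

/-- `E(G) = A − ξ(G)·(DGᵀ + GDᵀ)`. -/
noncomputable def Emat {n k : ℕ} (A : Matrix (Fin n) (Fin n) ℝ)
    (D G : Matrix (Fin n) (Fin k) ℝ) : Matrix (Fin n) (Fin n) ℝ :=
  A - xi A D G • (D * Gᵀ + G * Dᵀ)

/-- The Frobenius norm of a real matrix. -/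
noncomputable def frobNorm {n k : ℕ} (M : Matrix (Fin n) (Fin k) ℝ) : ℝ :=
  Real.sqrt (∑ i, ∑ j, (M i j) ^ 2)

/-- `G` is a local maximizer of `η` on the Stiefel manifold `𝕆^{n×k}`. -/
def IsLocalMaxEta {n k : ℕ} (A : Matrix (Fin n) (Fin n) ℝ)
    (D G : Matrix (Fin n) (Fin k) ℝ) : Prop :=
  Gᵀ * G = 1 ∧ ∃ ε > (0 : ℝ), ∀ G' : Matrix (Fin n) (Fin k) ℝ,
    G'ᵀ * G' = 1 → frobNorm (G' - G) < ε → eta A D G' ≤ eta A D G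

/-!
With `ξ = ξ(G)`, expanding `E(G)` gives `tr(HᵀE(G)H) = tr(HᵀAH) − 2ξ·tr(HᵀD·GᵀH)` for every `H`,
which is `−tr(GᵀAG)` at `H = G`. For `S = ĜᵀD` positive semidefinite,
`0 ≤ tr((G − Ĝ)S(G − Ĝ)ᵀ) = 2·tr S − 2·tr(S·GᵀĜ)`, so the hypothesis turns into
`tr(ĜᵀAĜ) < ξ·(2s − t)` with `t = tr(GᵀD) > 0` and `s = tr(ĜᵀD)`. Multiplying by `t` and
using `t(2s − t) = s² − (s − t)² ≤ s²` gives `η(Ĝ) > η(G)`.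
-/

section Stiefel

variable {m n : Type*} [Fintype m] [Fintype n] [DecidableEq n]

lemma trace_transpose_mul_mul_pos [Nonempty n] {A : Matrix m m ℝ} (hA : A.PosDef)
    {G : Matrix m n ℝ} (hG : Gᵀ * G = 1) : 0 < (Gᵀ * A * G).trace := by
  have hinj : Function.Injective G.mulVec := fun x y hxy => by
    simpa [mulVec_mulVec, hG] using congrArg (Gᵀ *ᵥ ·) hxy
  have hpos := hA.conjTranspose_mul_mul_same hinj
  rw [conjTranspose_eq_transpose_of_trivial] at hpos
  exact hpos.trace_pos

lemma trace_mul_transpose_mul_le_trace {S : Matrix n n ℝ} (hS : S.PosSemidef)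
    {G H : Matrix m n ℝ} (hG : Gᵀ * G = 1) (hH : Hᵀ * H = 1) :
    (S * (Gᵀ * H)).trace ≤ S.trace := by
  have hSsymm : Sᵀ = S := by
    simpa [conjTranspose_eq_transpose_of_trivial] using hS.isHermitian.eq
  have hswap : (S * (Hᵀ * G)).trace = (S * (Gᵀ * H)).trace := by
    rw [← trace_transpose, transpose_mul, transpose_mul, transpose_transpose, hSsymm,
      trace_mul_comm]
  have hsq : 0 ≤ ((G - H) * S * (G - H)ᵀ).trace := by
    simpa [conjTranspose_eq_transpose_of_trivial] using
      (hS.mul_mul_conjTranspose_same (G - H)).trace_nonneg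
  have hexpand : ((G - H) * S * (G - H)ᵀ).trace
      = 2 * S.trace - (S * (Gᵀ * H)).trace - (S * (Hᵀ * G)).trace := by
    have hgram : (G - H)ᵀ * (G - H) = 1 + 1 - Gᵀ * H - Hᵀ * G := by
      rw [transpose_sub, Matrix.sub_mul, Matrix.mul_sub, Matrix.mul_sub, hG, hH]
      abel
    rw [trace_mul_cycle, trace_mul_comm, hgram]
    simp only [Matrix.mul_sub, Matrix.mul_add, Matrix.mul_one, trace_sub, trace_add]
    ring
  linarith

end Stiefel

lemma trace_transpose_mul_Emat_mul {n k : ℕ} (A : Matrix (Fin n) (Fin n) ℝ)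
    (D G H : Matrix (Fin n) (Fin k) ℝ) :
    (Hᵀ * Emat A D G * H).trace
      = (Hᵀ * A * H).trace - 2 * xi A D G * (Hᵀ * D * (Gᵀ * H)).trace := by
  have hflip : (Hᵀ * (G * Dᵀ) * H).trace = (Hᵀ * D * (Gᵀ * H)).trace := by
    rw [← trace_transpose]
    simp only [transpose_mul, transpose_transpose, Matrix.mul_assoc]
  have hassoc : Hᵀ * (D * Gᵀ) * H = Hᵀ * D * (Gᵀ * H) := by simp only [Matrix.mul_assoc]
  simp only [Emat, Matrix.mul_sub, Matrix.sub_mul, Matrix.mul_smul, Matrix.smul_mul,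
    Matrix.mul_add, Matrix.add_mul, trace_sub, trace_add, trace_smul, smul_eq_mul, hassoc, hflip]
  ring

lemma trace_transpose_mul_Emat_mul_self {n k : ℕ} (A : Matrix (Fin n) (Fin n) ℝ)
    (D : Matrix (Fin n) (Fin k) ℝ) {G : Matrix (Fin n) (Fin k) ℝ} (hG : Gᵀ * G = 1)
    (hD : (Gᵀ * D).trace ≠ 0) :
    (Gᵀ * Emat A D G * G).trace = -(Gᵀ * A * G).trace := by
  rw [trace_transpose_mul_Emat_mul, hG, Matrix.mul_one, xi]
  field_simp
  ring

theorem eta_gt_of_trace_lt_general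
    (n k : ℕ)
    (A : Matrix (Fin n) (Fin n) ℝ) (hA : A.PosDef)
    (D : Matrix (Fin n) (Fin k) ℝ)
    (G Ghat : Matrix (Fin n) (Fin k) ℝ) (hG : Gᵀ * G = 1) (hGhat : Ghatᵀ * Ghat = 1)
    (htr : 0 < Matrix.trace (Gᵀ * D))
    (hpsd : (Ghatᵀ * D).PosSemidef)
    (hlt : Matrix.trace (Ghatᵀ * Emat A D G * Ghat) < Matrix.trace (Gᵀ * Emat A D G * G)) :
    eta A D G < eta A D Ghat := by
  have : Nonempty (Fin k) := not_isEmpty_iff.mp fun _ => by simp [trace_eq_zero_of_isEmpty] at htr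
  have ha := trace_transpose_mul_mul_pos hA hG
  have hahat := trace_transpose_mul_mul_pos hA hGhat
  have hcross := trace_mul_transpose_mul_le_trace hpsd hG hGhat
  have hxi : xi A D G * (Gᵀ * D).trace = (Gᵀ * A * G).trace := div_mul_cancel₀ _ htr.ne'
  rw [trace_transpose_mul_Emat_mul_self A D hG htr.ne', trace_transpose_mul_Emat_mul] at hlt
  set t := (Gᵀ * D).trace
  set s := (Ghatᵀ * D).trace
  set a := (Gᵀ * A * G).trace
  set c := (Ghatᵀ * D * (Gᵀ * Ghat)).trace
  have hbound : (Ghatᵀ * A * Ghat).trace * t < a * (2 * s - t) := by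
    have hlt_t := mul_lt_mul_of_pos_right hlt htr
    have hac : xi A D G * c * t = a * c := by rw [← hxi]; ring
    nlinarith [mul_le_mul_of_nonneg_left hcross ha.le]
  rw [eta, eta, div_lt_div_iff₀ ha hahat]
  nlinarith [mul_nonneg ha.le (sq_nonneg (s - t))]

/-- if `tr(GᵀD) > 0`, `ĜᵀD = DᵀĜ` is positive semidefinite, and
`tr(ĜᵀE(G)Ĝ) < tr(GᵀE(G)G)`, then `η(Ĝ) > η(G)`. -/
theorem eta_gt_of_trace_lt
    (n k : ℕ) (hk1 : 1 ≤ k) (hkn : k < n)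
    (A : Matrix (Fin n) (Fin n) ℝ) (hA : A.PosDef)
    (D : Matrix (Fin n) (Fin k) ℝ)
    (G Ghat : Matrix (Fin n) (Fin k) ℝ) (hG : Gᵀ * G = 1) (hGhat : Ghatᵀ * Ghat = 1)
    (htr : 0 < Matrix.trace (Gᵀ * D))
    (hsym : Ghatᵀ * D = Dᵀ * Ghat) (hpsd : (Ghatᵀ * D).PosSemidef)
    (hlt : Matrix.trace (Ghatᵀ * Emat A D G * Ghat) < Matrix.trace (Gᵀ * Emat A D G * G)) :
    eta A D G < eta A D Ghat :=
  eta_gt_of_trace_lt_general n k A hA D G Ghat hG hGhat htr hpsd hlt
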